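/- arXiv:1209.0841 — 3 statements merged into one kernel-verified Lean document; each statement's English description precedes it below -/
import Mathlib

section
/- Let D₀ ∈ ℝ^{m×n₀} and D_e ∈ ℝ^{m×n_e}, and let S_{D₀}, S_{D_e} denote their column spans. Suppose τ ≥ 0 satisfies |μᵀν| ≤ τ · ‖μ‖₂ · ‖ν‖₂ for all μ ∈ S_{D₀} and ν ∈ S_{D_e}, and suppose τ · ‖D_e‖_{1,2} > 0. Then for every nonzero x ∈ S_{D₀} and every z_e ∈ ℝ^{n_e} with x = D_e z_e, the ℓ1 norm of z_e satisfies ‖z_e‖₁ ≥ ‖x‖₂ / (τ · ‖D_e‖_{1,2}). -/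
open Matrix BigOperators

/-- The subspace of `ℝ^m` spanned by the columns of `A`. -/
def colSpan {m n : ℕ} (A : Matrix (Fin m) (Fin n) ℝ) : Submodule ℝ (Fin m → ℝ) :=
  Submodule.span ℝ (Set.range Aᵀ)

/-- The Euclidean (ℓ2) norm of a vector. -/
noncomputable def l2norm {ι : Type} [Fintype ι] (c : ι → ℝ) : ℝ :=
  Real.sqrt (∑ i, (c i) ^ 2)

/-- `‖A‖_{1,2}`: the maximum ℓ2 norm among the columns of `A`. -/
noncomputable def maxColNorm {m n : ℕ} (A : Matrix (Fin m) (Fin n) ℝ) : ℝ :=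
  ⨆ j, l2norm (fun i => A i j)

/-- If `τ ≥ 0` bounds the cosine of the angle between the column spans of `D₀` and `De`
(`|μᵀν| ≤ τ ‖μ‖₂ ‖ν‖₂` for all `μ ∈ S_{D₀}`, `ν ∈ S_{De}`), and `τ ‖De‖_{1,2} > 0`, then for
every nonzero `x ∈ S_{D₀}` and every `zₑ` with `x = De zₑ`,
`‖zₑ‖₁ ≥ ‖x‖₂ / (τ ‖De‖_{1,2})`. -/
theorem l1_norm_lower_bound_of_error_rep {m n₀ nₑ : ℕ}
    (D₀ : Matrix (Fin m) (Fin n₀) ℝ) (De : Matrix (Fin m) (Fin nₑ) ℝ)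
    (τ : ℝ) (hτ : 0 ≤ τ)
    (hangle : ∀ μ ∈ colSpan D₀, ∀ ν ∈ colSpan De,
      |∑ i, μ i * ν i| ≤ τ * l2norm μ * l2norm ν)
    (hpos : 0 < τ * maxColNorm De) :
    ∀ x ∈ colSpan D₀, x ≠ 0 → ∀ ze : Fin nₑ → ℝ, x = De.mulVec ze →
      l2norm x / (τ * maxColNorm De) ≤ ∑ j, |ze j| := by
  intro x hx hx0 ze hze
  set M := maxColNorm De with hM
  have hcol : ∀ j, l2norm (fun i => De i j) ≤ M := by
    intro j
    exact le_ciSup (f := fun j => l2norm fun i => De i j)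
      (Set.Finite.bddAbove (Set.finite_range _)) j
  have hl2nn : 0 ≤ l2norm x := Real.sqrt_nonneg _
  have hxcol : ∀ j, |∑ i, x i * De i j| ≤ τ * l2norm x * M := by
    intro j
    have hmem : (fun i => De i j) ∈ colSpan De :=
      Submodule.subset_span ⟨j, rfl⟩
    calc |∑ i, x i * De i j| ≤ τ * l2norm x * l2norm (fun i => De i j) :=
          hangle x hx _ hmem
      _ ≤ τ * l2norm x * M := by
          exact mul_le_mul_of_nonneg_left (hcol j) (by positivity)
  have hsq : l2norm x ^ 2 = ∑ i, x i ^ 2 := Real.sq_sqrt (by positivity)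
  have hswap : ∑ i, x i ^ 2 = ∑ j, ze j * ∑ i, x i * De i j := by
    have hx2 : ∀ i, x i = ∑ j, De i j * ze j := fun i => by rw [hze]; rfl
    calc ∑ i, x i ^ 2 = ∑ i, x i * (∑ j, De i j * ze j) := by
          apply Finset.sum_congr rfl; intro i _; rw [sq]; congr 1; exact hx2 i
      _ = ∑ i, ∑ j, ze j * (x i * De i j) := by
          apply Finset.sum_congr rfl; intro i _; rw [Finset.mul_sum]
          apply Finset.sum_congr rfl; intro j _; ring
      _ = ∑ j, ze j * ∑ i, x i * De i j := by
          rw [Finset.sum_comm]; apply Finset.sum_congr rfl; intro j _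
          rw [Finset.mul_sum]
  have key : l2norm x ^ 2 ≤ (∑ j, |ze j|) * (τ * l2norm x * M) := by
    rw [hsq, hswap, Finset.sum_mul]
    calc ∑ j, ze j * ∑ i, x i * De i j
        ≤ ∑ j, |ze j * ∑ i, x i * De i j| :=
          Finset.sum_le_sum fun j _ => le_abs_self _
      _ ≤ ∑ j, |ze j| * (τ * l2norm x * M) := by
          apply Finset.sum_le_sum
          intro j _
          rw [abs_mul]
          exact mul_le_mul_of_nonneg_left (hxcol j) (abs_nonneg _)
  have hl2pos : 0 < l2norm x := by
    rcases Function.ne_iff.mp hx0 with ⟨i, hi⟩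
    apply Real.sqrt_pos.mpr
    have habs := abs_pos.mpr hi
    have : 0 < x i ^ 2 := by nlinarith [sq_abs (x i), sq_nonneg (x i)]
    exact lt_of_lt_of_le this (Finset.single_le_sum (fun k _ => sq_nonneg (x k))
      (Finset.mem_univ i))
  rw [div_le_iff₀ hpos]
  nlinarith [key, hl2pos, Finset.sum_nonneg (fun j (_ : j ∈ Finset.univ) => abs_nonneg (ze j))]
end

section
/- Let D ∈ ℝ^{m×n} be a matrix of rank r with skinny singular value decomposition D = U_r Σ_r V_rᵀ, where U_r ∈ ℝ^{m×r} and V_r ∈ ℝ^{n×r} satisfy U_rᵀU_r = I_r and V_rᵀV_r = I_r, and Σ_r ∈ ℝ^{r×r} is diagonal with strictly positive diagonal entries. Then C* = V_r V_rᵀ is the unique solution of the problem: minimize ‖C‖_* subject to D = D C. That is: (i) D (V_r V_rᵀ) = D; (ii) for every C ∈ ℝ^{n×n} with D C = D, ‖V_r V_rᵀ‖_* ≤ ‖C‖_*; and (iii) if D C = D and ‖C‖_* = ‖V_r V_rᵀ‖_*, then C = V_r V_rᵀ. -/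
open Matrix BigOperators

/-- The nuclear norm of a real matrix: the sum of its singular values, i.e. the sum of the
square roots of the eigenvalues of the positive semidefinite matrix `CᴴC = CᵀC`. -/
noncomputable def nuclearNorm {k l : ℕ} (C : Matrix (Fin k) (Fin l) ℝ) : ℝ :=
  ∑ i, Real.sqrt ((show (Cᵀ * C).IsHermitian by
    simpa [Matrix.conjTranspose_eq_transpose_of_trivial] using
      Matrix.isHermitian_conjTranspose_mul_self C).eigenvalues i)

theorem Matrix.isHermitian_transpose_mul_self {k l : ℕ} (C : Matrix (Fin k) (Fin l) ℝ) :
    (Cᵀ * C).IsHermitian := by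
  simpa [Matrix.conjTranspose_eq_transpose_of_trivial] using
    Matrix.isHermitian_conjTranspose_mul_self C

namespace LrrAux

lemma dot_self_nonneg {n : ℕ} (x : Fin n → ℝ) : 0 ≤ x ⬝ᵥ x :=
  Finset.sum_nonneg fun _ _ => mul_self_nonneg _

lemma sqrt_dot_sq {n : ℕ} (x : Fin n → ℝ) : Real.sqrt (x ⬝ᵥ x) ^ 2 = x ⬝ᵥ x :=
  Real.sq_sqrt (dot_self_nonneg x)

lemma cs {n : ℕ} (x y : Fin n → ℝ) :
    x ⬝ᵥ y ≤ Real.sqrt (x ⬝ᵥ x) * Real.sqrt (y ⬝ᵥ y) := by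
  have h : (x ⬝ᵥ y) ^ 2 ≤ (x ⬝ᵥ x) * (y ⬝ᵥ y) := by
    have := Finset.sum_mul_sq_le_sq_mul_sq Finset.univ x y
    simpa [dotProduct, sq] using this
  calc x ⬝ᵥ y ≤ |x ⬝ᵥ y| := le_abs_self _
    _ = Real.sqrt ((x ⬝ᵥ y) ^ 2) := (Real.sqrt_sq_eq_abs _).symm
    _ ≤ Real.sqrt ((x ⬝ᵥ x) * (y ⬝ᵥ y)) := Real.sqrt_le_sqrt h
    _ = _ := Real.sqrt_mul (dot_self_nonneg x) _

lemma cs_eq {n : ℕ} (x y : Fin n → ℝ)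
    (h : x ⬝ᵥ y = Real.sqrt (x ⬝ᵥ x) * Real.sqrt (y ⬝ᵥ y)) :
    (x ⬝ᵥ x) • y = (x ⬝ᵥ y) • x := by
  have hsq : (x ⬝ᵥ y) ^ 2 = (x ⬝ᵥ x) * (y ⬝ᵥ y) := by
    rw [h, mul_pow, sqrt_dot_sq, sqrt_dot_sq]
  set d : Fin n → ℝ := (x ⬝ᵥ x) • y - (x ⬝ᵥ y) • x with hd
  have hdd : d ⬝ᵥ d = 0 := by
    have hyx : y ⬝ᵥ x = x ⬝ᵥ y := dotProduct_comm y x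
    simp only [hd, sub_dotProduct, dotProduct_sub,
      smul_dotProduct, dotProduct_smul, smul_eq_mul, hyx]
    linear_combination (-(x ⬝ᵥ x)) * hsq
  have hz : d = 0 := dotProduct_self_eq_zero.mp hdd
  exact sub_eq_zero.mp hz

lemma mulVec_dot {m n : ℕ} (A : Matrix (Fin m) (Fin n) ℝ) (x : Fin n → ℝ) (y : Fin m → ℝ) :
    (A *ᵥ x) ⬝ᵥ y = x ⬝ᵥ (Aᵀ *ᵥ y) := by
  rw [Matrix.dotProduct_mulVec, Matrix.vecMul_transpose, dotProduct_comm]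

lemma trace_eq_sum_cols {n : ℕ} (M V : Matrix (Fin n) (Fin n) ℝ) (hV : V * Vᵀ = 1) :
    M.trace = ∑ i, (fun j => V j i) ⬝ᵥ (M *ᵥ fun j => V j i) := by
  have h1 : ∀ i, (fun j => V j i) ⬝ᵥ (M *ᵥ fun j => V j i) = (Vᵀ * M * V) i i := by
    intro i
    simp only [Matrix.mul_apply, Matrix.mulVec, dotProduct,
      Matrix.transpose_apply, Finset.sum_mul, Finset.mul_sum]
    rw [Finset.sum_comm]
    exact Finset.sum_congr rfl fun j _ => Finset.sum_congr rfl fun k _ => by ring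
  calc M.trace = (1 * M).trace := by rw [one_mul]
    _ = (V * Vᵀ * M).trace := by rw [hV]
    _ = (Vᵀ * M * V).trace := (Matrix.trace_mul_cycle Vᵀ M V).symm
    _ = ∑ i, (Vᵀ * M * V) i i := rfl
    _ = _ := by simp_rw [h1]

lemma col_dot_one {n : ℕ} (V : Matrix (Fin n) (Fin n) ℝ) (hV : Vᵀ * V = 1) (i : Fin n) :
    (fun j => V j i) ⬝ᵥ (fun j => V j i) = 1 := by
  have h := congrFun (congrFun hV i) i
  simpa [Matrix.mul_apply, dotProduct, Matrix.one_apply] using h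

lemma spectral_cols {n : ℕ} (C : Matrix (Fin n) (Fin n) ℝ) :
    ∃ V : Matrix (Fin n) (Fin n) ℝ, V * Vᵀ = 1 ∧ Vᵀ * V = 1 ∧
      ∀ i, (Cᵀ * C) *ᵥ (fun j => V j i) =
        ((Matrix.isHermitian_transpose_mul_self C).eigenvalues i) • (fun j => V j i) := by
  have hH := Matrix.isHermitian_transpose_mul_self C
  set V : Matrix (Fin n) (Fin n) ℝ := (hH.eigenvectorUnitary : Matrix (Fin n) (Fin n) ℝ) with hVdef
  have hst : star V = Vᵀ := by
    rw [Matrix.star_eq_conjTranspose, Matrix.conjTranspose_eq_transpose_of_trivial]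
  have hVVt : V * Vᵀ = 1 := by
    rw [← hst]; exact (Matrix.mem_unitaryGroup_iff).mp hH.eigenvectorUnitary.2
  have hVtV : Vᵀ * V = 1 := by
    rw [← hst]; exact (Matrix.mem_unitaryGroup_iff').mp hH.eigenvectorUnitary.2
  have hdiag : Matrix.diagonal (RCLike.ofReal ∘ hH.eigenvalues) =
      Matrix.diagonal hH.eigenvalues := by
    rw [RCLike.ofReal_real_eq_id, Function.id_comp]
  have hCt : Cᴴ = Cᵀ := Matrix.conjTranspose_eq_transpose_of_trivial C
  have hspec : Cᵀ * C = V * Matrix.diagonal hH.eigenvalues * Vᵀ := by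
    have h := hH.spectral_theorem
    rw [Unitary.conjStarAlgAut_apply] at h
    rw [← hVdef] at h
    rw [← hst, ← hdiag]
    exact h
  have hMV : (Cᵀ * C) * V = V * Matrix.diagonal hH.eigenvalues := by
    conv_lhs => rw [hspec]
    rw [Matrix.mul_assoc, Matrix.mul_assoc, hVtV, Matrix.mul_one]
  refine ⟨V, hVVt, hVtV, fun i => ?_⟩
  funext j
  have h1 : ((Cᵀ * C) *ᵥ fun j => V j i) j = ((Cᵀ * C) * V) j i := by
    simp [Matrix.mulVec, Matrix.mul_apply, dotProduct]
  rw [h1, hMV, Matrix.mul_apply]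
  simp [Matrix.diagonal, Pi.smul_apply, smul_eq_mul, mul_comm]

lemma key {n : ℕ} (P C : Matrix (Fin n) (Fin n) ℝ)
    (hPt : Pᵀ = P) (hPP : P * P = P) (hPC : P * C = P) :
    P.trace ≤ nuclearNorm C ∧ (nuclearNorm C = P.trace → C = P) := by
  obtain ⟨V, hVVt, hVtV, hcol⟩ := spectral_cols C
  set lam := (Matrix.isHermitian_transpose_mul_self C).eigenvalues with hlam
  set w : Fin n → Fin n → ℝ := fun i j => V j i with hw
  have hwone : ∀ i, w i ⬝ᵥ w i = 1 := fun i => col_dot_one V hVtV i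
  have hwne : ∀ i, w i ≠ 0 := by
    intro i h0
    have := hwone i
    rw [h0] at this
    simp at this
  have hlam_nonneg : ∀ i, 0 ≤ lam i := fun i =>
    Matrix.eigenvalues_conjTranspose_mul_self_nonneg C i
  have hCw : ∀ i, (C *ᵥ w i) ⬝ᵥ (C *ᵥ w i) = lam i := by
    intro i
    rw [mulVec_dot, Matrix.mulVec_mulVec, hcol i]
    simp [dotProduct_smul, smul_eq_mul, hwone i]
    change lam i * w i ⬝ᵥ w i = lam i
    rw [hwone i, mul_one]
  have hPw_eq : ∀ x : Fin n → ℝ, (P *ᵥ x) ⬝ᵥ (P *ᵥ x) = x ⬝ᵥ (P *ᵥ x) := by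
    intro x
    rw [mulVec_dot, hPt, Matrix.mulVec_mulVec, hPP]
  have hNP : ∀ x : Fin n → ℝ,
      Real.sqrt ((P *ᵥ x) ⬝ᵥ (P *ᵥ x)) ≤ Real.sqrt (x ⬝ᵥ x) := by
    intro x
    rcases eq_or_lt_of_le (Real.sqrt_nonneg ((P *ᵥ x) ⬝ᵥ (P *ᵥ x))) with h0 | h0
    · rw [← h0]; exact Real.sqrt_nonneg _
    · have h1 : Real.sqrt ((P *ᵥ x) ⬝ᵥ (P *ᵥ x)) ^ 2 ≤
          Real.sqrt (x ⬝ᵥ x) * Real.sqrt ((P *ᵥ x) ⬝ᵥ (P *ᵥ x)) := by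
        calc Real.sqrt ((P *ᵥ x) ⬝ᵥ (P *ᵥ x)) ^ 2 = (P *ᵥ x) ⬝ᵥ (P *ᵥ x) := sqrt_dot_sq _
          _ = x ⬝ᵥ (P *ᵥ x) := hPw_eq x
          _ ≤ _ := cs x (P *ᵥ x)
      nlinarith [h1, h0]
  set t : Fin n → ℝ := fun i => (P *ᵥ w i) ⬝ᵥ (C *ᵥ w i) with ht
  have htc : ∀ i, t i = w i ⬝ᵥ ((P * C) *ᵥ w i) := by
    intro i
    simp only [ht]
    rw [mulVec_dot, hPt, Matrix.mulVec_mulVec]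
  have htrace : P.trace = ∑ i, t i := by
    calc P.trace = (P * C).trace := by rw [hPC]
      _ = ∑ i, w i ⬝ᵥ ((P * C) *ᵥ w i) := trace_eq_sum_cols (P * C) V hVVt
      _ = ∑ i, t i := by
          refine Finset.sum_congr rfl fun i _ => ?_
          rw [htc i]
  have hNCw : ∀ i, Real.sqrt ((C *ᵥ w i) ⬝ᵥ (C *ᵥ w i)) = Real.sqrt (lam i) := by
    intro i; rw [hCw i]
  have hNPw_le : ∀ i, Real.sqrt ((P *ᵥ w i) ⬝ᵥ (P *ᵥ w i)) ≤ 1 := by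
    intro i
    have := hNP (w i)
    rwa [hwone i, Real.sqrt_one] at this
  have ht_le : ∀ i, t i ≤ Real.sqrt (lam i) := by
    intro i
    calc t i ≤ Real.sqrt ((P *ᵥ w i) ⬝ᵥ (P *ᵥ w i)) *
        Real.sqrt ((C *ᵥ w i) ⬝ᵥ (C *ᵥ w i)) := cs _ _
      _ = Real.sqrt ((P *ᵥ w i) ⬝ᵥ (P *ᵥ w i)) * Real.sqrt (lam i) := by rw [hNCw i]
      _ ≤ 1 * Real.sqrt (lam i) :=
        mul_le_mul_of_nonneg_right (hNPw_le i) (Real.sqrt_nonneg _)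
      _ = Real.sqrt (lam i) := one_mul _
  have hnn : nuclearNorm C = ∑ i, Real.sqrt (lam i) := rfl
  have hineq : P.trace ≤ nuclearNorm C := by
    rw [htrace, hnn]
    exact Finset.sum_le_sum fun i _ => ht_le i
  refine ⟨hineq, fun heq => ?_⟩
  -- equality case
  have hsum_eq : ∑ i, t i = ∑ i, Real.sqrt (lam i) := by
    rw [← htrace, ← hnn, heq]
  have hall : ∀ i ∈ Finset.univ, t i = Real.sqrt (lam i) :=
    (Finset.sum_eq_sum_iff_of_le fun i _ => ht_le i).mp hsum_eq
  have hCwP : ∀ i, C *ᵥ w i = P *ᵥ w i := by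
    intro i
    by_cases hli : lam i = 0
    · have hC0 : C *ᵥ w i = 0 := by
        apply dotProduct_self_eq_zero.mp
        rw [hCw i, hli]
      have hP0 : P *ᵥ w i = 0 := by
        have h1 : P *ᵥ w i = (P * C) *ᵥ w i := by rw [hPC]
        rw [h1, ← Matrix.mulVec_mulVec, hC0, Matrix.mulVec_zero]
      rw [hC0, hP0]
    · have hlpos : 0 < lam i := lt_of_le_of_ne (hlam_nonneg i) (Ne.symm hli)
      have hsl : 0 < Real.sqrt (lam i) := Real.sqrt_pos.mpr hlpos
      have hti : t i = Real.sqrt (lam i) := hall i (Finset.mem_univ i)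
      -- ‖P w i‖ = 1
      have hge : 1 ≤ Real.sqrt ((P *ᵥ w i) ⬝ᵥ (P *ᵥ w i)) := by
        have h1 : t i ≤ Real.sqrt ((P *ᵥ w i) ⬝ᵥ (P *ᵥ w i)) * Real.sqrt (lam i) := by
          calc t i ≤ Real.sqrt ((P *ᵥ w i) ⬝ᵥ (P *ᵥ w i)) *
              Real.sqrt ((C *ᵥ w i) ⬝ᵥ (C *ᵥ w i)) := cs _ _
            _ = _ := by rw [hNCw i]
        rw [hti] at h1
        by_contra hcon
        push_neg at hcon
        nlinarith [h1, hsl, hcon]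
      have hNP1 : Real.sqrt ((P *ᵥ w i) ⬝ᵥ (P *ᵥ w i)) = 1 :=
        le_antisymm (hNPw_le i) hge
      have hPwPw : (P *ᵥ w i) ⬝ᵥ (P *ᵥ w i) = 1 := by
        have := sqrt_dot_sq (P *ᵥ w i)
        rw [hNP1] at this
        simpa using this.symm
      have hwPw : w i ⬝ᵥ (P *ᵥ w i) = 1 := by rw [← hPw_eq, hPwPw]
      -- P w i = w i
      have hPww : P *ᵥ w i = w i := by
        have hd : (w i - P *ᵥ w i) ⬝ᵥ (w i - P *ᵥ w i) = 0 := by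
          have hc : (P *ᵥ w i) ⬝ᵥ w i = w i ⬝ᵥ (P *ᵥ w i) := dotProduct_comm _ _
          simp only [sub_dotProduct, dotProduct_sub]
          rw [hwone i, hwPw, hPwPw, hc, hwPw]
          ring
        have := dotProduct_self_eq_zero.mp hd
        have := sub_eq_zero.mp this
        exact this.symm
      -- Cauchy-Schwarz equality for w i and C w i
      have htw : w i ⬝ᵥ (C *ᵥ w i) = Real.sqrt (lam i) := by
        rw [← hti]
        simp only [ht]
        rw [hPww]
      have hcs : w i ⬝ᵥ (C *ᵥ w i) =
          Real.sqrt (w i ⬝ᵥ w i) * Real.sqrt ((C *ᵥ w i) ⬝ᵥ (C *ᵥ w i)) := by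
        rw [htw, hwone i, Real.sqrt_one, one_mul, hNCw i]
      have hcseq := cs_eq (w i) (C *ᵥ w i) hcs
      rw [hwone i, htw, one_smul] at hcseq
      -- hcseq : C *ᵥ w i = √(lam i) • w i
      have hsl1 : Real.sqrt (lam i) = 1 := by
        have h1 : P *ᵥ w i = Real.sqrt (lam i) • (P *ᵥ w i) := by
          conv_lhs => rw [← hPC, ← Matrix.mulVec_mulVec, hcseq, Matrix.mulVec_smul]
        rw [hPww] at h1
        have h2 : (Real.sqrt (lam i) - 1) • w i = 0 := by
          rw [sub_smul, one_smul, ← h1, sub_self]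
        rcases smul_eq_zero.mp h2 with h3 | h3
        · linarith [sub_eq_zero.mp (by linarith [h3] : Real.sqrt (lam i) - 1 = 0)]
        · exact absurd h3 (hwne i)
      rw [hcseq, hsl1, one_smul, hPww]
  -- conclude C = P
  have hCV : C * V = P * V := by
    ext j i
    have h1 : (C * V) j i = (C *ᵥ w i) j := by
      simp [Matrix.mul_apply, Matrix.mulVec, dotProduct, hw]
    have h2 : (P * V) j i = (P *ᵥ w i) j := by
      simp [Matrix.mul_apply, Matrix.mulVec, dotProduct, hw]
    rw [h1, h2, hCwP i]
  calc C = C * 1 := (Matrix.mul_one C).symm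
    _ = C * (V * Vᵀ) := by rw [hVVt]
    _ = (C * V) * Vᵀ := (Matrix.mul_assoc C V Vᵀ).symm
    _ = (P * V) * Vᵀ := by rw [hCV]
    _ = P * (V * Vᵀ) := Matrix.mul_assoc P V Vᵀ
    _ = P := by rw [hVVt, Matrix.mul_one]

lemma nuclearNorm_proj {n : ℕ} (P : Matrix (Fin n) (Fin n) ℝ)
    (hPt : Pᵀ = P) (hPP : P * P = P) : nuclearNorm P = P.trace := by
  obtain ⟨V, hVVt, hVtV, hcol⟩ := spectral_cols P
  set lam := (Matrix.isHermitian_transpose_mul_self P).eigenvalues with hlam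
  set w : Fin n → Fin n → ℝ := fun i j => V j i with hw
  have hwone : ∀ i, w i ⬝ᵥ w i = 1 := fun i => col_dot_one V hVtV i
  have hwne : ∀ i, w i ≠ 0 := by
    intro i h0
    have := hwone i
    rw [h0] at this
    simp at this
  have hM : Pᵀ * P = P := by rw [hPt, hPP]
  have hcol' : ∀ i, P *ᵥ w i = lam i • w i := by
    intro i
    have := hcol i
    rwa [hM] at this
  have hsq : ∀ i, lam i * lam i = lam i := by
    intro i
    have h2 : P *ᵥ (P *ᵥ w i) = (lam i * lam i) • w i := by
      rw [hcol' i, Matrix.mulVec_smul, hcol' i, smul_smul]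
    have h3 : P *ᵥ (P *ᵥ w i) = lam i • w i := by
      rw [Matrix.mulVec_mulVec, hPP, hcol' i]
    have h4 : (lam i * lam i - lam i) • w i = 0 := by
      rw [sub_smul, ← h2, ← h3, sub_self]
    rcases smul_eq_zero.mp h4 with h5 | h5
    · linarith [sub_eq_zero.mp (by linarith [h5] : lam i * lam i - lam i = 0)]
    · exact absurd h5 (hwne i)
  have hroot : ∀ i, Real.sqrt (lam i) = lam i := by
    intro i
    have h1 : lam i * (lam i - 1) = 0 := by nlinarith [hsq i]
    rcases mul_eq_zero.mp h1 with h2 | h2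
    · rw [h2, Real.sqrt_zero]
    · have : lam i = 1 := by linarith
      rw [this, Real.sqrt_one]
  have hsum : ∑ i, lam i = P.trace := by
    rw [trace_eq_sum_cols P V hVVt]
    refine Finset.sum_congr rfl fun i _ => ?_
    rw [hcol' i]
    simp [dotProduct_smul, smul_eq_mul, hwone i]
    change lam i = lam i * w i ⬝ᵥ w i
    rw [hwone i, mul_one]
  calc nuclearNorm P = ∑ i, Real.sqrt (lam i) := rfl
    _ = ∑ i, lam i := Finset.sum_congr rfl fun i _ => hroot i
    _ = P.trace := hsum

end LrrAux

/-- **Lemma 4.** Let `D = Ur Σr Vrᵀ` be a skinny SVD of a rank-`r` matrix `D`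
(`UrᵀUr = I`, `VrᵀVr = I`, `Σr` diagonal with positive diagonal). Then `C* = Vr Vrᵀ` is the
unique solution of `min ‖C‖_*  s.t.  D = D C`:
(i) `D (Vr Vrᵀ) = D`; (ii) every feasible `C` has `‖Vr Vrᵀ‖_* ≤ ‖C‖_*`; and
(iii) any feasible `C` attaining this value equals `Vr Vrᵀ`. -/
theorem lrr_unique_solution {m n r : ℕ}
    (D : Matrix (Fin m) (Fin n) ℝ)
    (Ur : Matrix (Fin m) (Fin r) ℝ) (Vr : Matrix (Fin n) (Fin r) ℝ)
    (σ : Fin r → ℝ) (hσ : ∀ i, 0 < σ i)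
    (hU : Urᵀ * Ur = 1) (hV : Vrᵀ * Vr = 1)
    (hD : D = Ur * Matrix.diagonal σ * Vrᵀ)
    (hrank : D.rank = r) :
    D * (Vr * Vrᵀ) = D ∧
      (∀ C : Matrix (Fin n) (Fin n) ℝ, D * C = D →
        nuclearNorm (Vr * Vrᵀ) ≤ nuclearNorm C) ∧
      (∀ C : Matrix (Fin n) (Fin n) ℝ, D * C = D →
        nuclearNorm C = nuclearNorm (Vr * Vrᵀ) → C = Vr * Vrᵀ) := by
  set P := Vr * Vrᵀ with hPdef
  have hPt : Pᵀ = P := by rw [hPdef, Matrix.transpose_mul, Matrix.transpose_transpose]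
  have hPP : P * P = P := by
    rw [hPdef, Matrix.mul_assoc, ← Matrix.mul_assoc Vrᵀ Vr Vrᵀ, hV, Matrix.one_mul]
  have hVtP : Vrᵀ * (Vr * Vrᵀ) = Vrᵀ := by
    rw [← Matrix.mul_assoc, hV, Matrix.one_mul]
  have hDP : D * P = D := by
    rw [hD, hPdef, Matrix.mul_assoc, hVtP]
  have htr : P.trace = (r : ℝ) := by
    rw [hPdef, Matrix.trace_mul_comm, hV, Matrix.trace_one]
    simp
  have hfeas : ∀ C : Matrix (Fin n) (Fin n) ℝ, D * C = D → P * C = P := by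
    intro C hC
    rw [hD] at hC
    have h2 : Matrix.diagonal σ * (Vrᵀ * C) = Matrix.diagonal σ * Vrᵀ := by
      have h1 := congrArg (fun M => Urᵀ * M) hC
      simp only [← Matrix.mul_assoc] at h1
      rw [hU, Matrix.one_mul] at h1
      rw [Matrix.mul_assoc] at h1
      exact h1
    have h3 : Vrᵀ * C = Vrᵀ := by
      ext i j
      have h4 := congrFun (congrFun h2 i) j
      rw [Matrix.diagonal_mul, Matrix.diagonal_mul] at h4
      exact mul_left_cancel₀ (hσ i).ne' h4
    rw [hPdef, Matrix.mul_assoc, h3]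
  have hnnP : nuclearNorm P = (r : ℝ) := by
    rw [LrrAux.nuclearNorm_proj P hPt hPP, htr]
  refine ⟨hDP, ?_, ?_⟩
  · intro C hC
    have h := (LrrAux.key P C hPt hPP (hfeas C hC)).1
    rw [hnnP, ← htr]
    exact h
  · intro C hC hCeq
    apply (LrrAux.key P C hPt hPP (hfeas C hC)).2
    rw [hCeq, hnnP, htr]
end

section
/- Let Y ∈ ℝ^{m×n}, let λ > 0, let y_i ∈ ℝ^m denote the i-th column of Y, and let Y_i denote the matrix Y with its i-th column replaced by the zero vector. Then a vector c* ∈ ℝ^n minimizes the function c ↦ (1/2)·‖y_i − Y_i c‖₂² + λ·‖c‖₂² over all of ℝ^n if and only if e_iᵀ c* = 0 and c* minimizes the function c ↦ (1/2)·‖y_i − Y c‖₂² + λ·‖c‖₂² over the set {c ∈ ℝ^n : e_iᵀ c = 0}. -/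
open Matrix BigOperators

lemma l2norm_sq {ι : Type} [Fintype ι] (c : ι → ℝ) :
    l2norm c ^ 2 = ∑ i, (c i) ^ 2 := by
  rw [l2norm, Real.sq_sqrt]
  exact Finset.sum_nonneg fun i _ => sq_nonneg _

lemma single_dot {n : ℕ} (i : Fin n) (c : Fin n → ℝ) :
    (Pi.single i 1 : Fin n → ℝ) ⬝ᵥ c = c i := by
  simp [dotProduct, Pi.single_apply]

lemma sum_sq_update {n : ℕ} (i : Fin n) (c : Fin n → ℝ) :
    ∑ j, (Function.update c i 0 j) ^ 2 = (∑ j, c j ^ 2) - c i ^ 2 := by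
  have h : ∀ j, (Function.update c i 0 j) ^ 2
      = Function.update (fun j => c j ^ 2) i 0 j := by
    intro j
    rcases eq_or_ne j i with hj | hj
    · subst hj
      rw [Function.update_self, Function.update_self]
      ring
    · rw [Function.update_of_ne hj, Function.update_of_ne hj]
  simp only [h]
  rw [Finset.sum_update_of_mem (Finset.mem_univ i), zero_add,
    Finset.sdiff_singleton_eq_erase, Finset.sum_erase_eq_sub (Finset.mem_univ i)]

/-- Proof of the main theorem. -/
theorem l2graph_unconstrained_iff_constrained {m n : ℕ}
    (Y : Matrix (Fin m) (Fin n) ℝ) (lam : ℝ) (hlam : 0 < lam) (i : Fin n)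
    (yi : Fin m → ℝ) (hyi : yi = fun a => Y a i)
    (Yi : Matrix (Fin m) (Fin n) ℝ)
    (hYi : Yi = Matrix.of fun a b => if b = i then 0 else Y a b)
    (c : Fin n → ℝ) :
    (∀ c' : Fin n → ℝ,
        (1 / 2) * l2norm (yi - Yi.mulVec c) ^ 2 + lam * l2norm c ^ 2 ≤
          (1 / 2) * l2norm (yi - Yi.mulVec c') ^ 2 + lam * l2norm c' ^ 2) ↔
      ((Pi.single i 1 : Fin n → ℝ) ⬝ᵥ c = 0 ∧
        ∀ c' : Fin n → ℝ, (Pi.single i 1 : Fin n → ℝ) ⬝ᵥ c' = 0 →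
          (1 / 2) * l2norm (yi - Y.mulVec c) ^ 2 + lam * l2norm c ^ 2 ≤
            (1 / 2) * l2norm (yi - Y.mulVec c') ^ 2 + lam * l2norm c' ^ 2) := by
  -- Yi applied to a vector ignores its i-th coordinate
  have hmul_update : ∀ v : Fin n → ℝ, Yi.mulVec (Function.update v i 0) = Yi.mulVec v := by
    intro v
    funext a
    simp only [mulVec, dotProduct]
    refine Finset.sum_congr rfl fun b _ => ?_
    by_cases hb : b = i
    · subst hb; simp [hYi]
    · simp [hb]
  -- if v i = 0 then Y.mulVec v = Yi.mulVec v
  have hmul_eq : ∀ v : Fin n → ℝ, v i = 0 → Y.mulVec v = Yi.mulVec v := by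
    intro v hv
    funext a
    simp only [mulVec, dotProduct]
    refine Finset.sum_congr rfl fun b _ => ?_
    by_cases hb : b = i
    · subst hb; simp [hYi, hv]
    · simp [hYi, hb]
  constructor
  · intro h
    -- first show c i = 0
    have hci : c i = 0 := by
      have h1 := h (Function.update c i 0)
      rw [hmul_update c] at h1
      have h2 : lam * l2norm c ^ 2 ≤ lam * l2norm (Function.update c i 0) ^ 2 := by
        linarith
      rw [l2norm_sq, l2norm_sq, sum_sq_update] at h2
      have h3 : c i ^ 2 ≤ 0 := by nlinarith
      have h4 : c i ^ 2 = 0 := le_antisymm h3 (sq_nonneg _)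
      exact pow_eq_zero_iff two_ne_zero |>.mp h4
    refine ⟨by rw [single_dot, hci], fun c' hc' => ?_⟩
    rw [single_dot] at hc'
    rw [hmul_eq c hci, hmul_eq c' hc']
    exact h c'
  · rintro ⟨hci, h⟩
    rw [single_dot] at hci
    intro c'
    have hstep := h (Function.update c' i 0) (by rw [single_dot]; simp)
    rw [hmul_eq c hci, hmul_eq _ (by simp)] at hstep
    rw [hmul_update c'] at hstep
    have hnorm : l2norm (Function.update c' i 0) ^ 2 ≤ l2norm c' ^ 2 := by
      rw [l2norm_sq, l2norm_sq, sum_sq_update]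
      nlinarith [sq_nonneg (c' i)]
    nlinarith
end
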